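/- For every x, y in (0,1) there exist normalized confusion matrices for two groups, with all eight entries strictly positive, simultaneously satisfying equal opportunity (TPa·(1-y) = TPb·(1-x)), predictive parity (TPa·FPb = TPb·FPa), and treatment equality (FNa·FPb = FNb·FPa). -/
import Mathlib


theorem stmt
    (x y : ℝ) (hx0 : 0 < x) (hx1 : x < 1) (hy0 : 0 < y) (hy1 : y < 1) :
    ∃ TPa FNa TNa FPa TPb FNb TNb FPb : ℝ,
      0 < TPa ∧ 0 < FNa ∧ 0 < TNa ∧ 0 < FPa ∧
      0 < TPb ∧ 0 < FNb ∧ 0 < TNb ∧ 0 < FPb ∧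
      TPa + FNa = 1 - x ∧ TNa + FPa = x ∧
      TPb + FNb = 1 - y ∧ TNb + FPb = y ∧
      TPa * (1 - y) = TPb * (1 - x) ∧ TPa * FPb = TPb * FPa ∧ FNa * FPb = FNb * FPa := by
  have hx1' : 0 < 1 - x := by linarith
  have hy1' : 0 < 1 - y := by linarith
  set D : ℝ := x * (1 - y) + (1 - x) * y with hD
  have hDpos : 0 < D := by positivity
  refine ⟨(1-x)/2, (1-x)/2, x - x*y*(1-x)/(2*D), x*y*(1-x)/(2*D),
    (1-y)/2, (1-y)/2, y - x*y*(1-y)/(2*D), x*y*(1-y)/(2*D),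
    by positivity, by positivity, ?_, by positivity,
    by positivity, by positivity, ?_, by positivity,
    by ring, by ring, by ring, by ring, by ring, by ring, by ring⟩
  · rw [sub_pos, div_lt_iff₀ (by positivity), hD]
    nlinarith [mul_pos (mul_pos hx0 hx1') hy1', mul_pos (mul_pos hx0 hx0) hy1']
  · rw [sub_pos, div_lt_iff₀ (by positivity), hD]
    nlinarith [mul_pos (mul_pos hy0 hy1') hx1', mul_pos (mul_pos hy0 hy0) hx1']
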